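/- Let Σ = {A₁,…,A_m} be a finite set of n×n real matrices sharing an invariant proper cone K, with at least one A_i K-primitive. Then max{ρ(A)^{1/t} : A ∈ Σ^t} converges to the joint spectral radius ρ(Σ) as t → ∞, where ρ(A) denotes the (ordinary) spectral radius of the matrix A. -/

import Mathlib

/-!
Let `B = A i ^ s` map `K \ {0}` into the interior of `K` and fix `u` in that interior. By
compactness of the unit sphere of `K`, `B x - δ ‖x‖ u ∈ K` for all `x ∈ K`, and `K` is normal.
For a product `P` of length `t`, this gives `B P B u - α u ∈ K` with `α` proportional to
`‖P u‖`, so `(B P B) ^ k u` grows like `α ^ k` and Gelfand's formula yields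
`specRad (B P B) ≥ α`; since `u` is interior, `‖P‖ ≤ C ‖P u‖`. Hence every product of length `t`
is dominated by the spectral radius of a product of length `t + 2 s`, up to a fixed factor `γ`,
while `specRad P ≤ n ‖P‖`. Taking `t`-th roots squeezes the maximal normalized spectral radius
between two sequences tending to the joint spectral radius.
-/

open Filter Matrix

noncomputable section

attribute [local instance] Matrix.normedAddCommGroup

/-- A proper cone: closed, convex, closed under nonnegative scaling, with nonempty
interior, containing no straight line (salient). -/
def IsProperCone {E : Type*} [NormedAddCommGroup E] [NormedSpace ℝ E] (K : Set E) : Prop :=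
  IsClosed K ∧ Convex ℝ K ∧ (∀ c : ℝ, 0 ≤ c → ∀ x ∈ K, c • x ∈ K) ∧
    (interior K).Nonempty ∧ ∀ x ∈ K, x ≠ 0 → -x ∉ K

/-- `A` is `K`-primitive: `A K ⊆ K` and some power `A^t` maps `K \ {0}` into `int K`. -/
def KPrimitive {n : ℕ} (K : Set (Fin n → ℝ)) (A : Matrix (Fin n) (Fin n) ℝ) : Prop :=
  (∀ x ∈ K, A.mulVec x ∈ K) ∧ ∃ t : ℕ, ∀ x ∈ K, x ≠ 0 → (A ^ t).mulVec x ∈ interior K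

/-- The set of all products of length `t` of matrices from `S`. -/
def prodsOf {n : ℕ} (S : Set (Matrix (Fin n) (Fin n) ℝ)) (t : ℕ) :
    Set (Matrix (Fin n) (Fin n) ℝ) :=
  {P | ∃ w : Fin t → Matrix (Fin n) (Fin n) ℝ, (∀ i, w i ∈ S) ∧ P = (List.ofFn w).prod}

/-- `r` is the joint spectral radius of `S`. -/
def IsJSRadius {n : ℕ} (S : Set (Matrix (Fin n) (Fin n) ℝ)) (r : ℝ) : Prop :=
  Tendsto (fun t : ℕ => sSup ((fun P => ‖P‖ ^ (t : ℝ)⁻¹) '' prodsOf S t)) atTop (nhds r)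

/-- The (ordinary) spectral radius of a real matrix: the spectral radius of its
complexification. -/
def specRad {n : ℕ} (P : Matrix (Fin n) (Fin n) ℝ) : ℝ :=
  (spectralRadius ℂ (P.map (Complex.ofReal))).toReal

open scoped ENNReal

theorem ContinuousLinearMap.spectralRadius_le_nnnorm {E : Type*} [NormedAddCommGroup E]
    [NormedSpace ℂ E] [CompleteSpace E] (T : E →L[ℂ] E) : spectralRadius ℂ T ≤ ‖T‖₊ := by
  have hone : ‖(1 : E →L[ℂ] E)‖₊ ≤ 1 := ContinuousLinearMap.norm_id_le
  calc spectralRadius ℂ T ≤ ‖T‖₊ * ‖(1 : E →L[ℂ] E)‖₊ := by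
        simpa using spectrum.spectralRadius_le_pow_nnnorm_pow_one_div ℂ T 0
    _ ≤ ‖T‖₊ := by exact_mod_cast mul_le_of_le_one_right bot_le hone

theorem spectrum.ofReal_le_spectralRadius_of_mul_pow_le {A : Type*} [NormedRing A]
    [NormedAlgebra ℂ A] [CompleteSpace A] (a : A) {c α : ℝ} (hc : 0 < c) (hα : 0 ≤ α)
    (h : ∀ k : ℕ, c * α ^ k ≤ ‖a ^ k‖) : ENNReal.ofReal α ≤ spectralRadius ℂ a := by
  have hroot : Tendsto (fun k : ℕ => ENNReal.ofReal ((c * α ^ k) ^ (1 / k : ℝ))) atTop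
      (nhds (ENNReal.ofReal α)) := by
    refine ENNReal.tendsto_ofReal ?_
    have hc_root : Tendsto (fun k : ℕ => c ^ (1 / k : ℝ) * α) atTop (nhds α) := by
      simpa using (tendsto_const_nhds.rpow tendsto_one_div_atTop_nhds_zero_nat
        (Or.inl hc.ne')).mul_const α
    refine hc_root.congr' ?_
    filter_upwards [eventually_ne_atTop 0] with k hk
    rw [Real.mul_rpow hc.le (by positivity), ← Real.rpow_natCast, ← Real.rpow_mul hα,
      mul_one_div_cancel (by exact_mod_cast hk), Real.rpow_one]
  refine le_of_tendsto_of_tendsto' hroot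
    (spectrum.pow_norm_pow_one_div_tendsto_nhds_spectralRadius a) fun k => ?_
  gcongr
  exact h k

theorem norm_ofReal_comp {ι : Type*} [Fintype ι] (v : ι → ℝ) :
    ‖(fun i => (v i : ℂ))‖ = ‖v‖ := by
  simp [Pi.norm_def, Complex.nnnorm_real]

def Matrix.toSupNormCLM {ι : Type*} [Fintype ι] [DecidableEq ι] :
    Matrix ι ι ℂ ≃ₐ[ℂ] ((ι → ℂ) →L[ℂ] (ι → ℂ)) :=
  Matrix.toLinAlgEquiv'.trans (Module.End.toContinuousLinearMap (ι → ℂ))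

theorem Matrix.toSupNormCLM_apply {ι : Type*} [Fintype ι] [DecidableEq ι] (N : Matrix ι ι ℂ)
    (v : ι → ℂ) : N.toSupNormCLM v = N *ᵥ v := rfl

section SpecRad

variable {n : ℕ}

theorem specRad_eq_toReal_spectralRadius_toSupNormCLM (P : Matrix (Fin n) (Fin n) ℝ) :
    specRad P = (spectralRadius ℂ (P.map Complex.ofReal).toSupNormCLM).toReal := by
  simp only [specRad, spectralRadius, AlgEquiv.spectrum_eq]

theorem specRad_nonneg (P : Matrix (Fin n) (Fin n) ℝ) : 0 ≤ specRad P :=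
  ENNReal.toReal_nonneg

theorem specRad_le_mul_norm (P : Matrix (Fin n) (Fin n) ℝ) : specRad P ≤ n * ‖P‖ := by
  have hvec : ∀ v, ‖(P.map Complex.ofReal).toSupNormCLM v‖ ≤ n * ‖P‖ * ‖v‖ := fun v => by
    rw [Matrix.toSupNormCLM_apply]
    refine (pi_norm_le_iff_of_nonneg (by positivity)).2 fun i => ?_
    calc ‖∑ j, (P i j : ℂ) * v j‖ ≤ ∑ j, ‖(P i j : ℂ) * v j‖ := norm_sum_le _ _
      _ ≤ ∑ _j : Fin n, ‖P‖ * ‖v‖ := Finset.sum_le_sum fun j _ => by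
          rw [norm_mul, Complex.norm_real]
          exact mul_le_mul (norm_entry_le_entrywise_sup_norm P) (norm_le_pi_norm v j)
            (norm_nonneg _) (norm_nonneg _)
      _ = n * ‖P‖ * ‖v‖ := by simp [mul_assoc]
  rw [specRad_eq_toReal_spectralRadius_toSupNormCLM]
  calc _ ≤ ((‖(P.map Complex.ofReal).toSupNormCLM‖₊ : ℝ≥0∞)).toReal :=
        ENNReal.toReal_mono ENNReal.coe_ne_top (ContinuousLinearMap.spectralRadius_le_nnnorm _)
    _ ≤ n * ‖P‖ := ContinuousLinearMap.opNorm_le_bound _ (by positivity) hvec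

theorem le_specRad_of_mul_pow_le_norm_mulVec (M : Matrix (Fin n) (Fin n) ℝ) (u : Fin n → ℝ)
    {c α : ℝ} (hc : 0 < c) (h : ∀ k : ℕ, c * α ^ k ≤ ‖(M ^ k) *ᵥ u‖) : α ≤ specRad M := by
  rcases lt_or_ge α 0 with hα | hα
  · exact hα.le.trans (specRad_nonneg M)
  set T := (M.map Complex.ofReal).toSupNormCLM
  have hu : 0 < ‖u‖ := hc.trans_le (by simpa using h 0)
  have hpow : ∀ k : ℕ, c / ‖u‖ * α ^ k ≤ ‖T ^ k‖ := fun k => by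
    have hTk : (T ^ k) (fun i => (u i : ℂ)) = fun i => (((M ^ k) *ᵥ u) i : ℂ) := by
      have hmap : (M.map Complex.ofReal) ^ k = (M ^ k).map Complex.ofReal :=
        (Matrix.map_pow M Complex.ofRealHom k).symm
      rw [← map_pow, hmap, Matrix.toSupNormCLM_apply]
      ext i
      exact (RingHom.map_mulVec Complex.ofRealHom _ _ i).symm
    rw [div_mul_eq_mul_div, div_le_iff₀ hu]
    calc c * α ^ k ≤ ‖(M ^ k) *ᵥ u‖ := h k
      _ = ‖(T ^ k) (fun i => (u i : ℂ))‖ := by rw [hTk, norm_ofReal_comp]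
      _ ≤ ‖T ^ k‖ * ‖u‖ := norm_ofReal_comp u ▸ (T ^ k).le_opNorm _
  rw [specRad_eq_toReal_spectralRadius_toSupNormCLM, ← ENNReal.ofReal_le_iff_le_toReal
    (ne_top_of_le_ne_top ENNReal.coe_ne_top (ContinuousLinearMap.spectralRadius_le_nnnorm T))]
  exact spectrum.ofReal_le_spectralRadius_of_mul_pow_le _ (by positivity) hα hpow

end SpecRad

section Cone

variable {E : Type*} [NormedAddCommGroup E] [NormedSpace ℝ E] {K : Set E}

theorem add_mem_of_convex_of_smul_mem (hconv : Convex ℝ K)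
    (hsmul : ∀ c : ℝ, 0 ≤ c → ∀ x ∈ K, c • x ∈ K) {x y : E} (hx : x ∈ K) (hy : y ∈ K) :
    x + y ∈ K := by
  have := hsmul 2 zero_le_two _ (hconv hx hy (by norm_num : (0 : ℝ) ≤ 1 / 2)
    (by norm_num : (0 : ℝ) ≤ 1 / 2) (by norm_num))
  rwa [smul_add, smul_smul, smul_smul, show (2 : ℝ) * (1 / 2) = 1 by norm_num, one_smul,
    one_smul] at this

theorem ne_zero_of_mem_interior_of_salient [Nontrivial E] (hsal : ∀ x ∈ K, x ≠ 0 → -x ∉ K)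
    {u : E} (hu : u ∈ interior K) : u ≠ 0 := by
  rintro rfl
  obtain ⟨ε, hε, hball⟩ := Metric.mem_nhds_iff.1 (mem_interior_iff_mem_nhds.1 hu)
  obtain ⟨x, hx0, hxε⟩ : ∃ x : E, x ≠ 0 ∧ ‖x‖ < ε := by
    obtain ⟨v, hv⟩ := exists_ne (0 : E)
    refine ⟨(ε / 2 / ‖v‖) • v, smul_ne_zero (by positivity) hv, ?_⟩
    rw [norm_smul, Real.norm_of_nonneg (by positivity), div_mul_cancel₀ _ (norm_ne_zero_iff.2 hv)]
    linarith
  exact hsal x (hball (by simpa using hxε)) hx0 (hball (by simpa using hxε))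

theorem inv_norm_smul_mem_inter_sphere (hsmul : ∀ c : ℝ, 0 ≤ c → ∀ x ∈ K, c • x ∈ K) {x : E}
    (hx : x ∈ K) (hx0 : x ≠ 0) : ‖x‖⁻¹ • x ∈ K ∩ Metric.sphere 0 1 :=
  ⟨hsmul _ (by positivity) x hx, by simp [norm_smul, hx0]⟩

/-- Normality of a closed salient cone: its unit sphere keeps a positive distance from `-K`. -/
theorem exists_pos_mul_norm_le_of_sub_mem [ProperSpace E] (hcl : IsClosed K)
    (hsmul : ∀ c : ℝ, 0 ≤ c → ∀ x ∈ K, c • x ∈ K) (hsal : ∀ x ∈ K, x ≠ 0 → -x ∉ K) :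
    ∃ η > 0, ∀ x ∈ K, ∀ y, y - x ∈ K → η * ‖x‖ ≤ ‖y‖ := by
  have hdisj : Disjoint (K ∩ Metric.sphere 0 1) ((fun z => -z) ⁻¹' K) :=
    Set.disjoint_left.2 fun x hx => hsal x hx.1 (ne_zero_of_mem_sphere one_ne_zero ⟨x, hx.2⟩)
  obtain ⟨r, hr, hsep⟩ := Metric.exists_pos_forall_lt_edist
    ((isCompact_sphere 0 1).inter_left hcl) (hcl.preimage continuous_neg) hdisj
  refine ⟨r, hr, fun x hx y hyx => ?_⟩
  rcases eq_or_ne x 0 with rfl | hx0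
  · simp
  have hxn : 0 < ‖x‖ := norm_pos_iff.2 hx0
  have hlt := hsep _ (inv_norm_smul_mem_inter_sphere hsmul hx hx0) (‖x‖⁻¹ • x - ‖x‖⁻¹ • y)
    (by rw [Set.mem_preimage, ← smul_sub, ← smul_neg, neg_sub]
        exact hsmul _ (by positivity) _ hyx)
  rw [edist_nndist, ENNReal.coe_lt_coe, ← NNReal.coe_lt_coe, coe_nndist, dist_eq_norm,
    sub_sub_cancel, norm_smul, norm_inv, norm_norm, inv_mul_eq_div, lt_div_iff₀ hxn] at hlt
  exact hlt.le

theorem exists_pos_sub_smul_mem_of_mapsTo_interior [FiniteDimensional ℝ E] (B : E →ₗ[ℝ] E)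
    (hcl : IsClosed K) (hsmul : ∀ c : ℝ, 0 ≤ c → ∀ x ∈ K, c • x ∈ K)
    (hB : ∀ x ∈ K, x ≠ 0 → B x ∈ interior K) (u : E) :
    ∃ δ > 0, ∀ x ∈ K, B x - (δ * ‖x‖) • u ∈ K := by
  have himage : B '' (K ∩ Metric.sphere 0 1) ⊆ interior K := by
    rintro _ ⟨x, hx, rfl⟩
    exact hB x hx.1 (ne_zero_of_mem_sphere one_ne_zero ⟨x, hx.2⟩)
  obtain ⟨δ₀, hδ₀, hthick⟩ := (((isCompact_sphere 0 1).inter_left hcl).image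
    B.continuous_of_finiteDimensional).exists_thickening_subset_open isOpen_interior himage
  refine ⟨δ₀ / (‖u‖ + 1), by positivity, fun x hx => ?_⟩
  rcases eq_or_ne x 0 with rfl | hx0
  · simpa using hx
  have hxn : 0 < ‖x‖ := norm_pos_iff.2 hx0
  have hnear : B (‖x‖⁻¹ • x) - (δ₀ / (‖u‖ + 1)) • u ∈ K := by
    refine interior_subset (hthick (Metric.mem_thickening_iff.2 ⟨_, ⟨_,
      inv_norm_smul_mem_inter_sphere hsmul hx hx0, rfl⟩, ?_⟩))
    rw [dist_eq_norm, sub_sub_cancel_left, norm_neg, norm_smul, Real.norm_of_nonneg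
      (by positivity), div_mul_eq_mul_div, div_lt_iff₀ (by positivity)]
    nlinarith [norm_nonneg u]
  have := hsmul ‖x‖ hxn.le _ hnear
  rwa [smul_sub, map_smul, smul_smul, smul_smul, mul_inv_cancel₀ hxn.ne', one_smul,
    mul_comm] at this

end Cone

theorem Matrix.norm_le_of_forall_norm_mulVec_le {m l α : Type*} [Fintype m] [Fintype l]
    [DecidableEq l] [NormedRing α] [NormOneClass α] {P : Matrix m l α} {r : ℝ} (hr : 0 ≤ r)
    (h : ∀ z : l → α, ‖z‖ ≤ 1 → ‖P *ᵥ z‖ ≤ r) : ‖P‖ ≤ r := by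
  refine (Matrix.norm_le_iff hr).2 fun i j => ?_
  calc ‖P i j‖ = ‖(P *ᵥ Pi.single j 1) i‖ := by rw [Matrix.mulVec_single_one]; rfl
    _ ≤ ‖P *ᵥ Pi.single j 1‖ := norm_le_pi_norm _ i
    _ ≤ r := h _ (by rw [Pi.norm_single, norm_one])

section MatrixCone

variable {n : ℕ} {K : Set (Fin n → ℝ)}

theorem exists_norm_le_mul_norm_mulVec {η : ℝ} (hη : 0 < η)
    (hnormal : ∀ x ∈ K, ∀ y, y - x ∈ K → η * ‖x‖ ≤ ‖y‖) {u : Fin n → ℝ} (hu : u ∈ interior K) :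
    ∃ C > 0, ∀ P : Matrix (Fin n) (Fin n) ℝ, (∀ x ∈ K, P *ᵥ x ∈ K) → ‖P‖ ≤ C * ‖P *ᵥ u‖ := by
  obtain ⟨ε, hε, hball⟩ := Metric.mem_nhds_iff.1 (mem_interior_iff_mem_nhds.1 hu)
  have hnear : ∀ z : Fin n → ℝ, ‖z‖ ≤ 1 → u + (ε / 2) • z ∈ K := fun z hz => hball <| by
    rw [Metric.mem_ball, dist_eq_norm, add_sub_cancel_left, norm_smul,
      Real.norm_of_nonneg (by positivity)]
    nlinarith
  refine ⟨(2 / η + 1) / (ε / 2), by positivity, fun P hP => ?_⟩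
  refine Matrix.norm_le_of_forall_norm_mulVec_le (by positivity) fun z hz => ?_
  have hupper : η * ‖P *ᵥ (u + (ε / 2) • z)‖ ≤ ‖(2 : ℝ) • (P *ᵥ u)‖ :=
    hnormal _ (hP _ (hnear z hz)) _ <| by
      convert hP _ (hnear (-z) (by rwa [norm_neg])) using 1
      simp only [Matrix.mulVec_add, Matrix.mulVec_smul, Matrix.mulVec_neg]
      module
  rw [norm_smul, Real.norm_two] at hupper
  rw [div_mul_eq_mul_div, le_div_iff₀ (by positivity)]
  calc ‖P *ᵥ z‖ * (ε / 2) = ‖P *ᵥ (u + (ε / 2) • z) - P *ᵥ u‖ := by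
        rw [Matrix.mulVec_add, Matrix.mulVec_smul, add_sub_cancel_left, norm_smul,
          Real.norm_of_nonneg (by positivity), mul_comm]
    _ ≤ ‖P *ᵥ (u + (ε / 2) • z)‖ + ‖P *ᵥ u‖ := norm_sub_le _ _
    _ ≤ (2 / η + 1) * ‖P *ᵥ u‖ := by
        have : ‖P *ᵥ (u + (ε / 2) • z)‖ ≤ 2 / η * ‖P *ᵥ u‖ := by
          rw [div_mul_eq_mul_div, le_div_iff₀ hη]
          linarith
        linarith

theorem pow_mulVec_sub_pow_smul_mem (hadd : ∀ x ∈ K, ∀ y ∈ K, x + y ∈ K)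
    (hsmul : ∀ c : ℝ, 0 ≤ c → ∀ x ∈ K, c • x ∈ K) {M : Matrix (Fin n) (Fin n) ℝ}
    (hM : ∀ x ∈ K, M *ᵥ x ∈ K) {u : Fin n → ℝ} (hu : u ∈ K) {α : ℝ} (hα : 0 ≤ α)
    (hMu : M *ᵥ u - α • u ∈ K) (k : ℕ) : (M ^ k) *ᵥ u - α ^ k • u ∈ K := by
  induction k with
  | zero => simpa using hsmul 0 le_rfl u hu
  | succ k ih =>
    convert hadd _ (hM _ ih) _ (hsmul (α ^ k) (by positivity) _ hMu) using 1
    rw [pow_succ', ← Matrix.mulVec_mulVec, Matrix.mulVec_sub, Matrix.mulVec_smul, pow_succ,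
      smul_sub, smul_smul]
    abel

theorem le_specRad_of_sub_smul_mem (hadd : ∀ x ∈ K, ∀ y ∈ K, x + y ∈ K)
    (hsmul : ∀ c : ℝ, 0 ≤ c → ∀ x ∈ K, c • x ∈ K) {η : ℝ} (hη : 0 < η)
    (hnormal : ∀ x ∈ K, ∀ y, y - x ∈ K → η * ‖x‖ ≤ ‖y‖) {M : Matrix (Fin n) (Fin n) ℝ}
    (hM : ∀ x ∈ K, M *ᵥ x ∈ K) {u : Fin n → ℝ} (hu : u ∈ K) (hu0 : u ≠ 0) {α : ℝ}
    (hα : 0 ≤ α) (hMu : M *ᵥ u - α • u ∈ K) : α ≤ specRad M := by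
  refine le_specRad_of_mul_pow_le_norm_mulVec M u (c := η * ‖u‖)
    (mul_pos hη (norm_pos_iff.2 hu0)) fun k => ?_
  calc η * ‖u‖ * α ^ k = η * ‖α ^ k • u‖ := by
        rw [norm_smul, Real.norm_of_nonneg (pow_nonneg hα k)]
        ring
    _ ≤ ‖(M ^ k) *ᵥ u‖ := hnormal _ (hsmul _ (pow_nonneg hα k) u hu) _
        (pow_mulVec_sub_pow_smul_mem hadd hsmul hM hu hα hMu k)

theorem mul_mul_mulVec_sub_smul_mem (hadd : ∀ x ∈ K, ∀ y ∈ K, x + y ∈ K)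
    (hsmul : ∀ c : ℝ, 0 ≤ c → ∀ x ∈ K, c • x ∈ K) {η : ℝ}
    (hnormal : ∀ x ∈ K, ∀ y, y - x ∈ K → η * ‖x‖ ≤ ‖y‖) {δ : ℝ} (hδ : 0 ≤ δ)
    {B P : Matrix (Fin n) (Fin n) ℝ} {u : Fin n → ℝ}
    (hBδ : ∀ x ∈ K, B *ᵥ x - (δ * ‖x‖) • u ∈ K) (hB : ∀ x ∈ K, B *ᵥ x ∈ K)
    (hP : ∀ x ∈ K, P *ᵥ x ∈ K) (hu : u ∈ K) :
    (B * P * B) *ᵥ u - (δ * δ * η * ‖u‖ * ‖P *ᵥ u‖) • u ∈ K := by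
  set w := P *ᵥ (B *ᵥ u)
  have hw : δ * ‖u‖ * η * ‖P *ᵥ u‖ ≤ ‖w‖ := by
    have := hnormal _ (hsmul (δ * ‖u‖) (by positivity) _ (hP u hu)) w
      (by simpa [w, Matrix.mulVec_sub, Matrix.mulVec_smul] using hP _ (hBδ u hu))
    rw [norm_smul, Real.norm_of_nonneg (by positivity)] at this
    linarith
  have hαw : δ * δ * η * ‖u‖ * ‖P *ᵥ u‖ ≤ δ * ‖w‖ := by
    calc δ * δ * η * ‖u‖ * ‖P *ᵥ u‖ = δ * (δ * ‖u‖ * η * ‖P *ᵥ u‖) := by ring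
      _ ≤ δ * ‖w‖ := by gcongr
  convert hadd _ (hBδ w (hP _ (hB u hu))) _ (hsmul _ (sub_nonneg.2 hαw) u hu) using 1
  rw [← Matrix.mulVec_mulVec, ← Matrix.mulVec_mulVec, sub_smul]
  abel

end MatrixCone

theorem exists_pos_mul_norm_le_specRad_mul_mul {n : ℕ} {K : Set (Fin n → ℝ)}
    (hK : IsProperCone K) {B : Matrix (Fin n) (Fin n) ℝ}
    (hB : ∀ x ∈ K, x ≠ 0 → B *ᵥ x ∈ interior K) :
    ∃ γ > 0, ∀ P : Matrix (Fin n) (Fin n) ℝ, (∀ x ∈ K, P *ᵥ x ∈ K) →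
      γ * ‖P‖ ≤ specRad (B * P * B) := by
  obtain ⟨hcl, hconv, hsmul, ⟨u, hu⟩, hsal⟩ := hK
  rcases isEmpty_or_nonempty (Fin n) with hn | hn
  · exact ⟨1, one_pos, fun P _ => by simpa [Subsingleton.elim P 0] using specRad_nonneg _⟩
  have hadd : ∀ x ∈ K, ∀ y ∈ K, x + y ∈ K := fun x hx y hy =>
    add_mem_of_convex_of_smul_mem hconv hsmul hx hy
  have huK : u ∈ K := interior_subset hu
  have hu0 : u ≠ 0 := ne_zero_of_mem_interior_of_salient hsal hu
  have hun : 0 < ‖u‖ := norm_pos_iff.2 hu0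
  obtain ⟨η, hη, hnormal⟩ := exists_pos_mul_norm_le_of_sub_mem hcl hsmul hsal
  obtain ⟨C, hC, hPu⟩ := exists_norm_le_mul_norm_mulVec hη hnormal hu
  obtain ⟨δ, hδ, hBδ⟩ := exists_pos_sub_smul_mem_of_mapsTo_interior B.mulVecLin hcl hsmul hB u
  simp only [Matrix.mulVecLin_apply] at hBδ
  have hBK : ∀ x ∈ K, B *ᵥ x ∈ K := fun x hx => by
    simpa using hadd _ (hBδ x hx) _ (hsmul (δ * ‖x‖) (by positivity) u huK)
  refine ⟨δ * δ * η * ‖u‖ / C, by positivity, fun P hP => ?_⟩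
  have hM : ∀ x ∈ K, (B * P * B) *ᵥ x ∈ K := fun x hx => by
    rw [← Matrix.mulVec_mulVec, ← Matrix.mulVec_mulVec]
    exact hBK _ (hP _ (hBK x hx))
  calc δ * δ * η * ‖u‖ / C * ‖P‖ ≤ δ * δ * η * ‖u‖ / C * (C * ‖P *ᵥ u‖) := by
        gcongr
        exact hPu P hP
    _ = δ * δ * η * ‖u‖ * ‖P *ᵥ u‖ := by field_simp
    _ ≤ specRad (B * P * B) := le_specRad_of_sub_smul_mem hadd hsmul hη hnormal hM huK hu0
        (by positivity) (mul_mul_mulVec_sub_smul_mem hadd hsmul hnormal hδ.le hBδ hBK hP huK)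

section ProdsOf

variable {n : ℕ} {S : Set (Matrix (Fin n) (Fin n) ℝ)}

theorem mul_mem_prodsOf {t₁ t₂ : ℕ} {P Q : Matrix (Fin n) (Fin n) ℝ}
    (hP : P ∈ prodsOf S t₁) (hQ : Q ∈ prodsOf S t₂) : P * Q ∈ prodsOf S (t₁ + t₂) := by
  obtain ⟨w₁, hw₁, rfl⟩ := hP
  obtain ⟨w₂, hw₂, rfl⟩ := hQ
  refine ⟨Fin.append w₁ w₂, Fin.addCases (by simpa using hw₁) (by simpa using hw₂), ?_⟩
  rw [List.ofFn_fin_append, List.prod_append]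

theorem pow_mem_prodsOf {B : Matrix (Fin n) (Fin n) ℝ} (hB : B ∈ S) (t : ℕ) :
    B ^ t ∈ prodsOf S t :=
  ⟨fun _ => B, fun _ => hB, by rw [List.ofFn_const, List.prod_replicate]⟩

theorem prodsOf_nonempty (hS : S.Nonempty) (t : ℕ) : (prodsOf S t).Nonempty :=
  let ⟨_, hB⟩ := hS
  ⟨_, pow_mem_prodsOf hB t⟩

theorem prodsOf_finite (hS : S.Finite) (t : ℕ) : (prodsOf S t).Finite := by
  refine ((Set.Finite.pi fun _ : Fin t => hS).image fun w => (List.ofFn w).prod).subset ?_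
  rintro _ ⟨w, hw, rfl⟩
  exact ⟨w, fun i _ => hw i, rfl⟩

theorem mulVec_mem_of_mem_prodsOf {K : Set (Fin n → ℝ)} (hS : ∀ B ∈ S, ∀ x ∈ K, B *ᵥ x ∈ K)
    {t : ℕ} {P : Matrix (Fin n) (Fin n) ℝ} (hP : P ∈ prodsOf S t) : ∀ x ∈ K, P *ᵥ x ∈ K := by
  obtain ⟨w, hw, rfl⟩ := hP
  refine List.prod_induction (fun Q => ∀ x ∈ K, Q *ᵥ x ∈ K) (fun Q R hQ hR x hx => ?_)
    (fun x hx => by rwa [Matrix.one_mulVec]) (fun Q hQ => ?_)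
  · rw [← Matrix.mulVec_mulVec]
    exact hQ _ (hR x hx)
  · obtain ⟨i, rfl⟩ := List.mem_ofFn.1 hQ
    exact hS _ (hw i)

end ProdsOf

/-- `supRoot (prodsOf S) (‖·‖)` is the sequence in `IsJSRadius S`, and
`supRoot (prodsOf S) specRad` the one in `max_spectral_radius_tendsto_jsr`. -/
def supRoot {α : Type*} (X : ℕ → Set α) (a : α → ℝ) (t : ℕ) : ℝ :=
  sSup ((fun x => a x ^ (t : ℝ)⁻¹) '' X t)

section SupRoot

variable {α : Type*} {X : ℕ → Set α} {a b : α → ℝ}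

theorem supRoot_le_rpow_mul {t : ℕ} (hne : (X t).Nonempty) (hfin : (X t).Finite)
    (ha : ∀ x, 0 ≤ a x) (hb : ∀ x, 0 ≤ b x) {C : ℝ} (hC : 0 ≤ C) (hba : ∀ x, b x ≤ C * a x) :
    supRoot X b t ≤ C ^ (t : ℝ)⁻¹ * supRoot X a t := by
  refine csSup_le (hne.image _) ?_
  rintro _ ⟨x, hx, rfl⟩
  calc b x ^ (t : ℝ)⁻¹ ≤ (C * a x) ^ (t : ℝ)⁻¹ := by gcongr; exacts [hb x, hba x]
    _ = C ^ (t : ℝ)⁻¹ * a x ^ (t : ℝ)⁻¹ := Real.mul_rpow hC (ha x)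
    _ ≤ C ^ (t : ℝ)⁻¹ * supRoot X a t := by
        gcongr
        exact le_csSup (hfin.image _).bddAbove ⟨x, hx, rfl⟩

theorem rpow_mul_supRoot_rpow_le {t s : ℕ} (ht : t ≠ 0) (hne : (X t).Nonempty)
    (hfin : (X t).Finite) (hfin' : (X (t + s)).Finite) (ha : ∀ x, 0 ≤ a x) {γ : ℝ} (hγ : 0 ≤ γ)
    (hab : ∀ x ∈ X t, ∃ y ∈ X (t + s), γ * a x ≤ b y) :
    γ ^ ((t + s : ℕ) : ℝ)⁻¹ * supRoot X a t ^ ((t : ℝ) / (t + s : ℕ)) ≤ supRoot X b (t + s) := by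
  obtain ⟨x, hx, hmax⟩ :=
    (hne.image fun x => a x ^ (t : ℝ)⁻¹).csSup_mem (hfin.image _)
  obtain ⟨y, hy, hxy⟩ := hab x hx
  have hroot : (a x ^ (t : ℝ)⁻¹) ^ ((t : ℝ) / (t + s : ℕ)) = a x ^ ((t + s : ℕ) : ℝ)⁻¹ := by
    rw [← Real.rpow_mul (ha x), inv_mul_eq_div, div_div_cancel_left' (by exact_mod_cast ht)]
  calc γ ^ ((t + s : ℕ) : ℝ)⁻¹ * supRoot X a t ^ ((t : ℝ) / (t + s : ℕ))
      = (γ * a x) ^ ((t + s : ℕ) : ℝ)⁻¹ := by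
        rw [supRoot, ← hmax, hroot, Real.mul_rpow hγ (ha x)]
    _ ≤ b y ^ ((t + s : ℕ) : ℝ)⁻¹ := by gcongr; exact mul_nonneg hγ (ha x)
    _ ≤ supRoot X b (t + s) := le_csSup (hfin'.image _).bddAbove ⟨y, hy, rfl⟩

theorem tendsto_supRoot_of_le_of_le (s : ℕ) (hfin : ∀ t, (X t).Finite)
    (hne : ∀ t, (X t).Nonempty) (ha : ∀ x, 0 ≤ a x) (hb : ∀ x, 0 ≤ b x) {C γ : ℝ} (hC : 0 < C)
    (hγ : 0 < γ) (hba : ∀ x, b x ≤ C * a x) (hab : ∀ t, ∀ x ∈ X t, ∃ y ∈ X (t + s), γ * a x ≤ b y)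
    {ρ : ℝ} (hρ : Tendsto (supRoot X a) atTop (nhds ρ)) :
    Tendsto (supRoot X b) atTop (nhds ρ) := by
  have hroot_one : ∀ c : ℝ, 0 < c →
      Tendsto (fun t : ℕ => c ^ ((t + s : ℕ) : ℝ)⁻¹) atTop (nhds 1) := fun c hc => by
    simpa using tendsto_const_nhds.rpow
      (tendsto_inv_atTop_nhds_zero_nat.comp (tendsto_add_atTop_nat s)) (Or.inl hc.ne')
  have hexp : Tendsto (fun t : ℕ => (t : ℝ) / (t + s : ℕ)) atTop (nhds 1) := by
    simpa using tendsto_natCast_div_add_atTop (s : ℝ)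
  have hlower := (hroot_one γ hγ).mul (hρ.rpow hexp (Or.inr one_pos))
  have hupper := (hroot_one C hC).mul (hρ.comp (tendsto_add_atTop_nat s))
  rw [one_mul, Real.rpow_one] at hlower
  rw [one_mul] at hupper
  rw [← tendsto_add_atTop_iff_nat s]
  refine tendsto_of_tendsto_of_tendsto_of_le_of_le' hlower hupper ?_ ?_
  · filter_upwards [eventually_ne_atTop 0] with t ht
    exact rpow_mul_supRoot_rpow_le ht (hne t) (hfin t) (hfin _) ha hγ.le (hab t)
  · exact Eventually.of_forall fun t =>
      supRoot_le_rpow_mul (hne _) (hfin _) ha hb hC.le hba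

end SupRoot

/-- If a finite set of matrices shares an invariant proper cone `K` and one of them is
`K`-primitive, then the maximal normalized spectral radius of products of length `t`
converges to the joint spectral radius. -/
theorem max_spectral_radius_tendsto_jsr {n m : ℕ} (A : Fin m → Matrix (Fin n) (Fin n) ℝ)
    (K : Set (Fin n → ℝ)) (hK : IsProperCone K)
    (hinv : ∀ i, ∀ x ∈ K, (A i).mulVec x ∈ K)
    (hprim : ∃ i, KPrimitive K (A i))
    (ρ : ℝ) (hρ : IsJSRadius (Set.range A) ρ) :
    Tendsto (fun t : ℕ =>
        sSup ((fun P => specRad P ^ (t : ℝ)⁻¹) '' prodsOf (Set.range A) t)) atTop (nhds ρ) := by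
  obtain ⟨i, -, s, hs⟩ := hprim
  have hmem : A i ∈ Set.range A := Set.mem_range_self i
  have hS : ∀ B ∈ Set.range A, ∀ x ∈ K, B *ᵥ x ∈ K := by
    rintro _ ⟨j, rfl⟩
    exact hinv j
  obtain ⟨γ, hγ, hγP⟩ := exists_pos_mul_norm_le_specRad_mul_mul hK hs
  refine tendsto_supRoot_of_le_of_le (s + s) (prodsOf_finite (Set.finite_range A))
    -- `n + 1` rather than `n`, which vanishes when `n = 0`
    (prodsOf_nonempty ⟨_, hmem⟩) norm_nonneg specRad_nonneg (C := n + 1) (by positivity) hγ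
    (fun P => (specRad_le_mul_norm P).trans (by gcongr; linarith))
    (fun t P hP => ⟨_, ?_, hγP P (mulVec_mem_of_mem_prodsOf hS hP)⟩) hρ
  rw [show t + (s + s) = s + t + s by ring]
  exact mul_mem_prodsOf (mul_mem_prodsOf (pow_mem_prodsOf hmem s) hP) (pow_mem_prodsOf hmem s)
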